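/- arXiv:2410.20500 — 6 statements merged into one kernel-verified Lean document; each statement's English description precedes it below -/
import Mathlib

section
/- Let A be a Noetherian ring, I ⊆ A an ideal, Â the I-adic completion, and M a finitely generated A-module. Then the natural map M[I^∞] → M̂[I^∞] from the I-power-torsion submodule of M to the I-power-torsion submodule of the completion M̂ ≅ M ⊗_A Â is a bijection. -/
open Submodule

universe u₁ u₂

/-- Universe-polymorphic **Artin–Rees lemma**, transferred from the mathlib version
(which requires ring and module in the same universe) via `ULift`. -/
lemma artinRees {A : Type u₁} [CommRing A] [IsNoetherianRing A] (I : Ideal A)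
    {M : Type u₂} [AddCommGroup M] [Module A M] [Module.Finite A M] (N : Submodule A M) :
    ∃ k : ℕ, ∀ n ≥ k, (I ^ n • ⊤ : Submodule A M) ⊓ N
      = I ^ (n - k) • ((I ^ k • ⊤ : Submodule A M) ⊓ N) := by
  classical
  let B : Type (max u₁ u₂) := ULift.{u₂} A
  let σ : A ≃+* B := ULift.ringEquiv.symm
  letI : Module B (ULift.{u₁} M) := ULift.module'
  haveI : IsScalarTower B B (ULift.{u₁} M) := IsScalarTower.left _
  have hsmul : ∀ (b : B) (y : ULift.{u₁} M), (b • y).down = σ.symm b • y.down :=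
    fun _ _ => rfl
  haveI : IsNoetherianRing B := isNoetherianRing_of_ringEquiv A σ
  -- transfer submodules
  let lift : Submodule A M → Submodule B (ULift.{u₁} M) := fun X =>
    { carrier := {y | y.down ∈ X}
      zero_mem' := X.zero_mem
      add_mem' := fun h₁ h₂ => X.add_mem h₁ h₂
      smul_mem' := fun b y hy => by
        show (b • y).down ∈ X
        rw [hsmul]
        exact X.smul_mem _ hy }
  have hmem : ∀ (X : Submodule A M) (y : ULift.{u₁} M), y ∈ lift X ↔ y.down ∈ X :=
    fun _ _ => Iff.rfl
  haveI : Module.Finite B (ULift.{u₁} M) := by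
    obtain ⟨s, hs⟩ := Module.Finite.fg_top (R := A) (M := M)
    refine ⟨⟨s.image (fun x => ULift.up x), ?_⟩⟩
    rw [eq_top_iff]
    rintro y -
    have : y.down ∈ (⊤ : Submodule A M) := trivial
    rw [← hs] at this
    have key : ∀ x ∈ Submodule.span A (s : Set M),
        ULift.up.{u₁} x ∈ Submodule.span B ((s.image (fun x => ULift.up x) : Finset (ULift.{u₁} M)) : Set (ULift.{u₁} M)) := by
      intro x hx
      refine Submodule.span_induction (p := fun x _ => ULift.up.{u₁} x ∈ _) ?_ ?_ ?_ ?_ hx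
      · intro z hz
        exact Submodule.subset_span (Finset.mem_coe.mpr (Finset.mem_image_of_mem _ hz))
      · exact Submodule.zero_mem _
      · intro z w _ _ hz hw
        exact Submodule.add_mem _ hz hw
      · intro a z _ hz
        have : ULift.up.{u₁} (a • z) = σ a • ULift.up.{u₁} z := by
          apply ULift.ext
          rw [hsmul]
          simp
        rw [this]
        exact Submodule.smul_mem _ _ hz
    exact key y.down this
  -- `lift` commutes with the relevant operations
  have hsmul_lift : ∀ (J : Ideal A) (X : Submodule A M),
      (J.map (σ : A →+* B)) • lift X = lift (J • X) := by
    intro J X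
    apply le_antisymm
    · refine Submodule.smul_le.mpr fun b hb y hy => ?_
      rw [hmem]
      rw [hsmul]
      have hb' : σ.symm b ∈ J := by
        rw [Ideal.map_comap_of_equiv σ] at hb
        exact hb
      exact Submodule.smul_mem_smul hb' hy
    · rintro y hy
      rw [hmem] at hy
      have : ∀ z ∈ J • X, (ULift.up.{u₁} z) ∈ (J.map (σ : A →+* B)) • lift X := by
        intro z hz
        refine Submodule.smul_induction_on hz (fun a ha x hx => ?_) (fun x' y' hx' hy' => ?_)
        · have : ULift.up.{u₁} (a • x) = σ a • ULift.up.{u₁} x := by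
            apply ULift.ext
            rw [hsmul]
            simp
          rw [this]
          exact Submodule.smul_mem_smul (Ideal.mem_map_of_mem _ ha) hx
        · have : ULift.up.{u₁} (x' + y') = ULift.up.{u₁} x' + ULift.up.{u₁} y' := rfl
          rw [this]
          exact Submodule.add_mem _ hx' hy'
      exact this y.down hy
  have htop : lift ⊤ = ⊤ := by
    rw [eq_top_iff]; rintro y -; exact trivial
  have hinf : ∀ X Y : Submodule A M, lift (X ⊓ Y) = lift X ⊓ lift Y := fun X Y => rfl
  have hinj : ∀ X Y : Submodule A M, lift X = lift Y → X = Y := by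
    intro X Y h
    ext x
    have := SetLike.ext_iff.mp h (ULift.up x)
    simpa [hmem] using this
  have hlift_pow : ∀ (j : ℕ) (X : Submodule A M),
      lift (I ^ j • X) = (I.map (σ : A →+* B)) ^ j • lift X := by
    intro j X
    rw [← hsmul_lift, Ideal.map_pow]
  obtain ⟨k, hk⟩ := Ideal.exists_pow_inf_eq_pow_smul (I.map (σ : A →+* B)) (lift N)
  refine ⟨k, fun n hn => ?_⟩
  apply hinj
  rw [hinf, hlift_pow, htop, hlift_pow, hinf, hlift_pow, htop]
  exact hk n hn

section Aux

variable {A : Type*} [CommRing A] (I : Ideal A)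
variable (M : Type*) [AddCommGroup M] [Module A M]

/-- The submodule of elements killed by `I ^ n`. -/
def torsN (n : ℕ) : Submodule A M where
  carrier := {m | ∀ a ∈ I ^ n, a • m = 0}
  zero_mem' := fun a _ => smul_zero a
  add_mem' := fun {x y} hx hy a ha => by rw [smul_add, hx a ha, hy a ha, add_zero]
  smul_mem' := fun c x hx a ha => by rw [smul_comm, hx a ha, smul_zero]

/-- The `I`-power torsion submodule. -/
def torsSup : Submodule A M where
  carrier := {m | ∃ n : ℕ, ∀ a ∈ I ^ n, a • m = 0}
  zero_mem' := ⟨0, fun a _ => smul_zero a⟩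
  add_mem' := by
    rintro x y ⟨n, hn⟩ ⟨m, hm⟩
    refine ⟨max n m, fun a ha => ?_⟩
    rw [smul_add, hn a (Ideal.pow_le_pow_right (le_max_left n m) ha),
      hm a (Ideal.pow_le_pow_right (le_max_right n m) ha), add_zero]
  smul_mem' := by
    rintro c x ⟨n, hn⟩
    exact ⟨n, fun a ha => by rw [smul_comm, hn a ha, smul_zero]⟩

lemma mem_torsSup {m : M} : m ∈ torsSup I M ↔ ∃ n : ℕ, ∀ a ∈ I ^ n, a • m = 0 := Iff.rfl

variable [IsNoetherianRing A] [Module.Finite A M]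

/-- Over a Noetherian ring the `I`-power torsion of a finite module is killed by a
single power of `I`. -/
lemma exists_bound : ∃ s : ℕ, ∀ m ∈ torsSup I M, ∀ a ∈ I ^ s, a • m = 0 := by
  have hnoeth : IsNoetherian A M := inferInstance
  let T : ℕ →o Submodule A M :=
    ⟨fun n => torsN I M n, by
      intro n m h x hx a ha
      exact hx a (Ideal.pow_le_pow_right h ha)⟩
  obtain ⟨s, hs⟩ := monotone_stabilizes_iff_noetherian.mpr hnoeth T
  refine ⟨s, fun m hm => ?_⟩
  obtain ⟨n, hn⟩ := hm
  rcases le_total n s with h | h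
  · exact fun a ha => hn a (Ideal.pow_le_pow_right h ha)
  · have : m ∈ T s := (hs n h) ▸ (hn : m ∈ T n)
    exact this

end Aux

section Aux2

variable {A : Type*} [CommRing A] (I : Ideal A) [IsNoetherianRing A]

/-- Membership of a function in `J • ⊤` can be checked componentwise (finite index). -/
lemma pi_mem_smul_top {ι : Type*} [Fintype ι] [DecidableEq ι] (J : Ideal A)
    {P : Type*} [AddCommGroup P] [Module A P] (g : ι → P)
    (hg : ∀ i, g i ∈ (J • ⊤ : Submodule A P)) :
    g ∈ (J • ⊤ : Submodule A (ι → P)) := by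
  have hrepr : g = ∑ i, Pi.single i (g i) := (Finset.univ_sum_single g).symm
  rw [hrepr]
  refine Submodule.sum_mem _ fun i _ => ?_
  have h1 : Pi.single (M := fun _ : ι => P) i (g i) ∈
      Submodule.map (LinearMap.single A (fun _ : ι => P) i) (J • ⊤ : Submodule A P) :=
    Submodule.mem_map_of_mem (hg i)
  rw [Submodule.map_smul''] at h1
  exact Submodule.smul_mono le_rfl le_top h1

end Aux2

section Aux3

variable {A : Type*} [CommRing A] (I : Ideal A)
variable (M : Type*) [AddCommGroup M] [Module A M]

/-- The quotient by the `I`-power torsion has no `I`-power torsion. -/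
lemma quot_torsionFree (s : ℕ) (hs : ∀ m ∈ torsSup I M, ∀ a ∈ I ^ s, a • m = 0)
    (k : ℕ) (p : M ⧸ torsSup I M) (hp : ∀ a ∈ I ^ k, a • p = 0) : p = 0 := by
  obtain ⟨m, rfl⟩ := Submodule.Quotient.mk_surjective _ p
  rw [Submodule.Quotient.mk_eq_zero]
  refine ⟨s + k, fun a ha => ?_⟩
  rw [pow_add] at ha
  refine Submodule.mul_induction_on ha (fun b hb c hc => ?_)
    (fun x y hx hy => by rw [add_smul, hx, hy, add_zero])
  have hcm : c • m ∈ torsSup I M := by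
    rw [← Submodule.Quotient.mk_eq_zero, Submodule.Quotient.mk_smul]
    exact hp c hc
  rw [mul_smul]
  exact hs _ hcm b hb

end Aux3

section Aux4

variable {A : Type*} [CommRing A] (I : Ideal A) [IsNoetherianRing A]

/-- Key lemma: if `P` is a finite module with no `I`-power torsion, then any `I`-adic
Cauchy sequence in `P` whose class is `I ^ k`-torsion tends to zero. -/
lemma cauchy_torsionfree {P : Type*} [AddCommGroup P] [Module A P] [Module.Finite A P]
    (htf : ∀ k (p : P), (∀ a ∈ I ^ k, a • p = 0) → p = 0)
    (k : ℕ) (p : ℕ → P)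
    (hcauchy : ∀ i j : ℕ, i ≤ j → p i - p j ∈ (I ^ i • ⊤ : Submodule A P))
    (htors : ∀ n, ∀ a ∈ I ^ k, a • p n ∈ (I ^ n • ⊤ : Submodule A P)) :
    ∀ n, p n ∈ (I ^ n • ⊤ : Submodule A P) := by
  classical
  obtain ⟨T, hT⟩ : (I ^ k).FG := IsNoetherian.noetherian _
  let f : P →ₗ[A] (↥T → P) := LinearMap.pi fun t => (t : A) • LinearMap.id
  have hf : Function.Injective f := by
    refine (injective_iff_map_eq_zero f).mpr fun q hq => ?_
    refine htf k q fun a ha => ?_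
    rw [← hT] at ha
    refine Submodule.span_induction (p := fun a _ => a • q = 0) ?_ ?_ ?_ ?_ ha
    · intro t ht
      have := congrFun hq ⟨t, ht⟩
      simpa [f] using this
    · simp
    · intro x y _ _ hx hy
      rw [add_smul, hx, hy, add_zero]
    · intro a x _ hx
      rw [smul_eq_mul, mul_smul, hx, smul_zero]
  obtain ⟨c, hc⟩ := artinRees I (LinearMap.range f)
  intro n
  have h1 : f (p (n + c)) ∈
      (I ^ (n + c) • ⊤ : Submodule A (↥T → P)) ⊓ LinearMap.range f := by
    refine ⟨pi_mem_smul_top (I ^ (n + c)) _ (fun t => ?_), ⟨_, rfl⟩⟩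
    have htk : (t : A) ∈ I ^ k := hT ▸ Submodule.subset_span t.2
    simpa [f] using htors (n + c) (t : A) htk
  rw [hc (n + c) (by omega)] at h1
  have hnc : n + c - c = n := by omega
  rw [hnc] at h1
  have h2 : f (p (n + c)) ∈ Submodule.map f (I ^ n • ⊤ : Submodule A P) := by
    rw [Submodule.map_smul'', Submodule.map_top]
    exact Submodule.smul_mono le_rfl inf_le_right h1
  obtain ⟨q, hq, hfq⟩ := h2
  have hpq : p (n + c) = q := (hf hfq).symm
  have hmem : p (n + c) ∈ (I ^ n • ⊤ : Submodule A P) := hpq ▸ hq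
  have hsub : p n - p (n + c) ∈ (I ^ n • ⊤ : Submodule A P) := hcauchy n (n + c) (by omega)
  simpa using Submodule.add_mem _ hsub hmem

end Aux4

/-- Let `A` be Noetherian, `I ⊆ A` an ideal, `M` a finitely generated
`A`-module and `M̂` its `I`-adic completion. The natural map `M → M̂` restricts to a bijection
between the `I`-power-torsion submodule `M[I^∞]` of `M` and the `I`-power-torsion submodule
`M̂[I^∞]` of `M̂`. -/
theorem statement2 (A : Type*) [CommRing A] [IsNoetherianRing A] (I : Ideal A)
    (M : Type*) [AddCommGroup M] [Module A M] [Module.Finite A M] :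
    Set.BijOn (AdicCompletion.of I M)
      {m : M | ∃ n : ℕ, ∀ a ∈ I ^ n, a • m = 0}
      {x : AdicCompletion I M | ∃ n : ℕ, ∀ a ∈ I ^ n, a • x = 0} := by
  classical
  obtain ⟨s, hs⟩ := exists_bound I M
  obtain ⟨c, hc⟩ := artinRees I (torsSup I M)
  have hbot : ∀ n, c + s ≤ n → (I ^ n • ⊤ : Submodule A M) ⊓ torsSup I M = ⊥ := by
    intro n hn
    rw [hc n (by omega), eq_bot_iff]
    calc I ^ (n - c) • ((I ^ c • ⊤ : Submodule A M) ⊓ torsSup I M)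
        ≤ I ^ (n - c) • torsSup I M := Submodule.smul_mono le_rfl inf_le_right
      _ ≤ I ^ s • torsSup I M :=
          Submodule.smul_mono_left (Ideal.pow_le_pow_right (by omega))
      _ ≤ ⊥ := Submodule.smul_le.mpr fun r hr m hm => by
          rw [hs m hm r hr]; exact Submodule.zero_mem ⊥
  refine ⟨?_, ?_, ?_⟩
  · -- MapsTo
    rintro m ⟨n, hn⟩
    exact ⟨n, fun a ha => by rw [← map_smul, hn a ha, map_zero]⟩
  · -- InjOn
    rintro m₁ h₁ m₂ h₂ heq
    have hmem : m₁ - m₂ ∈ torsSup I M := Submodule.sub_mem _ h₁ h₂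
    have h0 : AdicCompletion.of I M (m₁ - m₂) = 0 := by rw [map_sub, heq, sub_self]
    have hpow : m₁ - m₂ ∈ (I ^ (c + s) • ⊤ : Submodule A M) := by
      have h1 : AdicCompletion.eval I M (c + s) (AdicCompletion.of I M (m₁ - m₂)) = 0 := by
        rw [h0]; simp
      rw [AdicCompletion.eval_of] at h1
      rwa [Submodule.mkQ_apply, Submodule.Quotient.mk_eq_zero] at h1
    have : m₁ - m₂ ∈ (I ^ (c + s) • ⊤ : Submodule A M) ⊓ torsSup I M := ⟨hpow, hmem⟩
    rw [hbot (c + s) le_rfl] at this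
    exact sub_eq_zero.mp this
  · -- SurjOn
    intro x hx
    refine AdicCompletion.induction_on I M x
      (p := fun y => y ∈ {x : AdicCompletion I M | ∃ n : ℕ, ∀ a ∈ I ^ n, a • x = 0} →
        y ∈ (AdicCompletion.of I M) '' {m : M | ∃ n : ℕ, ∀ a ∈ I ^ n, a • m = 0})
      (fun f hf => ?_) hx
    obtain ⟨k, hk⟩ := hf
    -- the sequence is `I ^ k`-torsion levelwise
    have htorsM : ∀ n, ∀ a ∈ I ^ k, a • f n ∈ (I ^ n • ⊤ : Submodule A M) := by
      intro n a ha
      have h0 := congrArg (fun x => AdicCompletion.eval I M n x) (hk a ha)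
      rw [← Submodule.Quotient.mk_eq_zero]
      simpa [AdicCompletion.val_smul, Submodule.mkQ_apply, ← Submodule.Quotient.mk_smul]
        using h0
    -- pass to the torsion-free quotient
    set S := torsSup I M with hS
    have hmapπ : ∀ n : ℕ, Submodule.map S.mkQ (I ^ n • ⊤ : Submodule A M) =
        (I ^ n • ⊤ : Submodule A (M ⧸ S)) := by
      intro n
      rw [Submodule.map_smul'', Submodule.map_top, Submodule.range_mkQ]
    have hP : ∀ n, S.mkQ (f n) ∈ (I ^ n • ⊤ : Submodule A (M ⧸ S)) := by
      refine cauchy_torsionfree I (quot_torsionFree I M s hs) k (fun n => S.mkQ (f n))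
        ?_ ?_
      · intro i j hij
        rw [← map_sub, ← hmapπ i]
        refine Submodule.mem_map_of_mem ?_
        exact (SModEq.sub_mem).mp (f.property hij)
      · intro n a ha
        rw [← map_smul, ← hmapπ n]
        exact Submodule.mem_map_of_mem (htorsM n a ha)
    -- decompose `f n = w n + z n` with `w n ∈ S`, `z n ∈ I ^ n • ⊤`
    have hdecomp : ∀ n, ∃ z ∈ (I ^ n • ⊤ : Submodule A M), f n - z ∈ S := by
      intro n
      have := hP n
      rw [← hmapπ n] at this
      obtain ⟨z, hz, hzz⟩ := this
      refine ⟨z, hz, ?_⟩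
      have : (Submodule.Quotient.mk (f n) : M ⧸ S) = Submodule.Quotient.mk z := by
        simpa [Submodule.mkQ_apply] using hzz.symm
      exact (Submodule.Quotient.eq S).mp this
    choose z hz1 hz2 using hdecomp
    -- the torsion parts stabilize
    have hstab : ∀ n, c + s ≤ n → (f (n + 1) - z (n + 1)) = (f n - z n) := by
      intro n hn
      have hmem1 : (f (n + 1) - z (n + 1)) - (f n - z n) ∈ S :=
        Submodule.sub_mem _ (hz2 (n + 1)) (hz2 n)
      have hmem2 : (f (n + 1) - z (n + 1)) - (f n - z n) ∈
          (I ^ n • ⊤ : Submodule A M) := by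
        have hf' : f n - f (n + 1) ∈ (I ^ n • ⊤ : Submodule A M) :=
          (SModEq.sub_mem).mp (f.property (Nat.le_succ n))
        have hz1' : z (n + 1) ∈ (I ^ n • ⊤ : Submodule A M) :=
          Submodule.smul_mono_left (Ideal.pow_le_pow_right (Nat.le_succ n)) (hz1 (n + 1))
        have : (f (n + 1) - z (n + 1)) - (f n - z n) =
            (-(f n - f (n + 1))) - z (n + 1) + z n := by abel
        rw [this]
        exact Submodule.add_mem _
          (Submodule.sub_mem _ (Submodule.neg_mem _ hf') hz1') (hz1 n)
      have : (f (n + 1) - z (n + 1)) - (f n - z n) ∈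
          (I ^ n • ⊤ : Submodule A M) ⊓ torsSup I M := ⟨hmem2, hmem1⟩
      rw [hbot n hn] at this
      exact sub_eq_zero.mp this
    set w := f (c + s) - z (c + s) with hw
    have hconst : ∀ n, c + s ≤ n → f n - z n = w := by
      intro n hn
      induction n, hn using Nat.le_induction with
      | base => rfl
      | succ n hn ih => rw [hstab n hn, ih]
    refine ⟨w, ⟨s, hs w (hz2 (c + s))⟩, ?_⟩
    -- `of w = mk f`
    apply AdicCompletion.ext
    intro n
    have hj : c + s ≤ n + (c + s) := by omega
    have hfw : f n - w ∈ (I ^ n • ⊤ : Submodule A M) := by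
      have h1 : f n - f (n + (c + s)) ∈ (I ^ n • ⊤ : Submodule A M) :=
        (SModEq.sub_mem).mp (f.property (by omega))
      have h2 : z (n + (c + s)) ∈ (I ^ n • ⊤ : Submodule A M) :=
        Submodule.smul_mono_left (Ideal.pow_le_pow_right (by omega)) (hz1 _)
      have : f n - w = (f n - f (n + (c + s))) + z (n + (c + s)) := by
        rw [← hconst _ hj]; abel
      rw [this]
      exact Submodule.add_mem _ h1 h2
    show Submodule.mkQ _ w = Submodule.mkQ _ (f n)
    rw [Submodule.mkQ_apply, Submodule.mkQ_apply, Submodule.Quotient.eq]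
    simpa using Submodule.neg_mem _ hfw
end

section
/- Let R be a ring, π ∈ R, and B an R-algebra that is Noetherian. Then there exists N ≥ 0 such that B[π^∞] = B[π^N], i.e., the π-power torsion of B is killed by π^N, and consequently the natural map B → B' ×_{B'''} B'' is an isomorphism, where B' = B/B[π^∞], B'' = B/π^N B, and B''' = B'/π^N B'. -/
open Submodule in
private lemma torsion_chain_mono {B : Type*} [CommRing B] (x : B) :
    Monotone (fun n : ℕ => Submodule.torsionBy B B (x ^ n)) := by
  intro n m h b hb
  simp only [Submodule.mem_torsionBy_iff] at hb ⊢
  have : x ^ m = x ^ (m - n) * x ^ n := by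
    rw [← pow_add]; congr 1; omega
  rw [this, mul_smul, hb, smul_zero]

/-- Let `R` be a ring, `π ∈ R`, and `B` a Noetherian `R`-algebra. Let
`B[π^∞] = ⨆ n, B[π^n]` be the ideal of `π`-power torsion elements. Then there is an `N ≥ 0`
with `B[π^∞] = B[π^N]`, and the natural map `B → B' ×_{B'''} B''` is an isomorphism, where
`B' = B/B[π^∞]`, `B'' = B/π^N B` and `B''' = B'/π^N B' = B/(B[π^∞] + π^N B)`: concretely, the
map `b ↦ (b mod B[π^∞], b mod π^N B)` is injective with image exactly the pairs agreeing
in `B'''`. -/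
theorem statement4 (R : Type*) [CommRing R] (π : R) (B : Type*) [CommRing B]
    [Algebra R B] [IsNoetherianRing B] :
    ∃ N : ℕ,
      (⨆ n : ℕ, Submodule.torsionBy B B ((algebraMap R B π) ^ n))
        = Submodule.torsionBy B B ((algebraMap R B π) ^ N) ∧
      (letI T : Ideal B := ⨆ n : ℕ, Submodule.torsionBy B B ((algebraMap R B π) ^ n)
       letI J : Ideal B := Ideal.span {(algebraMap R B π) ^ N}
       letI f : B → (B ⧸ T) × (B ⧸ J) :=
         fun b => (Ideal.Quotient.mk T b, Ideal.Quotient.mk J b)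
       Function.Injective f ∧
         Set.range f = {p : (B ⧸ T) × (B ⧸ J) |
           Ideal.Quotient.factor (le_sup_left : T ≤ T ⊔ J) p.1
             = Ideal.Quotient.factor (le_sup_right : J ≤ T ⊔ J) p.2}) := by
  set x := algebraMap R B π with hx
  have hmono := torsion_chain_mono (B := B) x
  set chain : ℕ →o Submodule B B := ⟨fun n => Submodule.torsionBy B B (x ^ n), hmono⟩
  obtain ⟨N, hN⟩ := monotone_stabilizes_iff_noetherian.mpr ‹IsNoetherianRing B› chain
  have hsup : (⨆ n : ℕ, Submodule.torsionBy B B (x ^ n))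
      = Submodule.torsionBy B B (x ^ N) := by
    apply le_antisymm
    · apply iSup_le
      intro n
      rcases le_total n N with h | h
      · exact hmono h
      · exact le_of_eq (hN n h).symm
    · exact le_iSup (fun n => Submodule.torsionBy B B (x ^ n)) N
  refine ⟨N, hsup, ?_, ?_⟩
  · -- injectivity
    intro a b hab
    simp only [Prod.mk.injEq, Ideal.Quotient.eq] at hab
    obtain ⟨h1, h2⟩ := hab
    rw [hsup, Submodule.mem_torsionBy_iff] at h1
    rw [Ideal.mem_span_singleton] at h2
    obtain ⟨c, hc⟩ := h2
    -- a - b = x^N * c, and x^N • (a - b) = 0, so x^(2N) • c = 0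
    have hc2 : (x ^ (N + N)) • c = 0 := by
      have : (x ^ N) • (a - b) = x ^ N * (x ^ N * c) := by rw [← hc]; rfl
      rw [h1] at this
      show x ^ (N + N) * c = 0
      rw [pow_add, mul_assoc, ← this]
    have hcT : c ∈ Submodule.torsionBy B B (x ^ N) := by
      rw [← hsup]
      exact le_iSup (fun n => Submodule.torsionBy B B (x ^ n)) (N + N)
        (by rwa [Submodule.mem_torsionBy_iff])
    rw [Submodule.mem_torsionBy_iff] at hcT
    have : a - b = 0 := by
      rw [hc]
      calc x ^ N * c = (x ^ N) • c := rfl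
        _ = 0 := hcT
    exact sub_eq_zero.mp this
  · -- range
    ext p
    constructor
    · rintro ⟨b, rfl⟩
      simp [Ideal.Quotient.factor]
    · rintro hp
      obtain ⟨u, hu⟩ := Ideal.Quotient.mk_surjective p.1
      obtain ⟨v, hv⟩ := Ideal.Quotient.mk_surjective p.2
      have : u - v ∈ (⨆ n : ℕ, Submodule.torsionBy B B (x ^ n)) ⊔
          Ideal.span {x ^ N} := by
        rw [← Ideal.Quotient.eq]
        have h := hp
        simp only [Set.mem_setOf_eq] at h
        rw [← hu, ← hv, Ideal.Quotient.factor_mk, Ideal.Quotient.factor_mk] at h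
        exact h
      rw [Submodule.mem_sup] at this
      obtain ⟨t, ht, j, hj, htj⟩ := this
      refine ⟨u - t, ?_⟩
      have e1 : Ideal.Quotient.mk (⨆ n : ℕ, Submodule.torsionBy B B (x ^ n)) (u - t)
          = p.1 := by
        rw [← hu, Ideal.Quotient.eq]
        simpa using ht
      have e2 : Ideal.Quotient.mk (Ideal.span {x ^ N}) (u - t) = p.2 := by
        rw [← hv, Ideal.Quotient.eq]
        have huv : u - t - v = j := by linear_combination -htj
        rw [huv]; exact hj
      exact Prod.ext e1 e2
end

section
/- Let D → D', D → B'' be surjective ring homomorphisms and B''' a ring with maps D' → B''' and B'' → B''' such that D ≅ D' ×_{B'''} B'' is the fiber product. If D' and B'' are finitely generated algebras over a Noetherian ring R, then D is a finitely generated R-algebra. -/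
/-- Let `R` be Noetherian, and let `D ≅ D' ×_{B'''} B''` be a fiber product
of commutative `R`-algebras in which both projections `D → D'` and `D → B''` are surjective.
If `D'` and `B''` are finitely generated `R`-algebras, then so is `D`. -/
theorem statement5 (R : Type*) [CommRing R] [IsNoetherianRing R]
    (D D' B'' B''' : Type*) [CommRing D] [CommRing D'] [CommRing B''] [CommRing B''']
    [Algebra R D] [Algebra R D'] [Algebra R B''] [Algebra R B''']
    (p₁ : D →ₐ[R] D') (p₂ : D →ₐ[R] B'') (q₁ : D' →ₐ[R] B''') (q₂ : B'' →ₐ[R] B''')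
    (hp₁ : Function.Surjective p₁) (hp₂ : Function.Surjective p₂)
    (hcomm : q₁.comp p₁ = q₂.comp p₂)
    (hinj : Function.Injective (fun d : D => (p₁ d, p₂ d)))
    (hrange : Set.range (fun d : D => (p₁ d, p₂ d))
      = {p : D' × B'' | q₁ p.1 = q₂ p.2})
    (h1 : Algebra.FiniteType R D') (h2 : Algebra.FiniteType R B'') :
    Algebra.FiniteType R D := by
  classical
  obtain ⟨s, hs⟩ := h1.out
  obtain ⟨t, ht⟩ := h2.out
  -- B'' is Noetherian, so ker q₂ is finitely generated
  haveI : IsNoetherianRing B'' := Algebra.FiniteType.isNoetherianRing R B'' (h := ⟨t, ht⟩)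
  obtain ⟨u, hu⟩ : (RingHom.ker q₂.toRingHom).FG := (IsNoetherian.noetherian _)
  -- lifts
  set f := Function.surjInv hp₁ with hf
  set g := Function.surjInv hp₂ with hg
  have hfp : ∀ x, p₁ (f x) = x := fun x => Function.surjInv_eq hp₁ x
  have hgp : ∀ x, p₂ (g x) = x := fun x => Function.surjInv_eq hp₂ x
  have key : ∀ b : B'', ∃ d : D, q₂ b = 0 → (p₁ d = 0 ∧ p₂ d = b) := by
    intro b
    by_cases hb : q₂ b = 0
    · have : ((0 : D'), b) ∈ {p : D' × B'' | q₁ p.1 = q₂ p.2} := by simp [hb]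
      rw [← hrange] at this
      obtain ⟨d, hd⟩ := this
      exact ⟨d, fun _ => ⟨congrArg Prod.fst hd, congrArg Prod.snd hd⟩⟩
    · exact ⟨0, fun h => absurd h hb⟩
  choose m hm using key
  set S : Finset D := s.image f ∪ t.image g ∪ u.image m with hS
  set A : Subalgebra R D := Algebra.adjoin R (S : Set D) with hA
  -- membership of generators
  have hfA : ∀ x ∈ s, f x ∈ A := fun x hx =>
    Algebra.subset_adjoin (Finset.mem_coe.2 (Finset.mem_union_left _
      (Finset.mem_union_left _ (Finset.mem_image_of_mem f hx))))
  have hgA : ∀ x ∈ t, g x ∈ A := fun x hx =>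
    Algebra.subset_adjoin (Finset.mem_coe.2 (Finset.mem_union_left _
      (Finset.mem_union_right _ (Finset.mem_image_of_mem g hx))))
  have hmA : ∀ x ∈ u, m x ∈ A := fun x hx =>
    Algebra.subset_adjoin (Finset.mem_coe.2 (Finset.mem_union_right _
      (Finset.mem_image_of_mem m hx)))
  -- p₂ restricted to A is surjective
  have hp₂A : ∀ b : B'', ∃ a ∈ A, p₂ a = b := by
    intro b
    have : A.map p₂ = ⊤ := by
      rw [eq_top_iff, ← ht]
      apply Algebra.adjoin_le
      intro y hy
      exact ⟨g y, hgA y hy, hgp y⟩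
    have hb : b ∈ A.map p₂ := this ▸ trivial
    obtain ⟨a, ha, hab⟩ := hb
    exact ⟨a, ha, hab⟩
  -- p₁ restricted to A is surjective
  have hp₁A : ∀ b : D', ∃ a ∈ A, p₁ a = b := by
    intro b
    have : A.map p₁ = ⊤ := by
      rw [eq_top_iff, ← hs]
      apply Algebra.adjoin_le
      intro y hy
      exact ⟨f y, hfA y hy, hfp y⟩
    have hb : b ∈ A.map p₁ := this ▸ trivial
    obtain ⟨a, ha, hab⟩ := hb
    exact ⟨a, ha, hab⟩
  -- q₂ ∘ p₂ = q₁ ∘ p₁ pointwise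
  have hcomm' : ∀ d : D, q₁ (p₁ d) = q₂ (p₂ d) := fun d => by
    have := DFunLike.congr_fun hcomm d
    simpa using this
  -- generators of u are in ker q₂
  have humem : ∀ b ∈ u, q₂ b = 0 := by
    intro b hb
    have : b ∈ RingHom.ker q₂.toRingHom := hu ▸ Ideal.subset_span hb
    exact this
  -- key claim: every element of ker q₂ is p₂ of an element of A ∩ ker p₁
  have hT : ∀ b ∈ RingHom.ker q₂.toRingHom, ∃ a ∈ A, p₁ a = 0 ∧ p₂ a = b := by
    intro b hb
    rw [← hu] at hb
    induction hb using Submodule.span_induction with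
    | mem x hx =>
      exact ⟨m x, hmA x hx, (hm x (humem x hx)).1, (hm x (humem x hx)).2⟩
    | zero => exact ⟨0, zero_mem A, by simp⟩
    | add x y _ _ hx hy =>
      obtain ⟨a, ha, ha1, ha2⟩ := hx
      obtain ⟨a', ha', ha1', ha2'⟩ := hy
      exact ⟨a + a', add_mem ha ha', by simp [ha1, ha1'], by simp [ha2, ha2']⟩
    | smul c x _ hx =>
      obtain ⟨a, ha, ha1, ha2⟩ := hx
      obtain ⟨ac, hac, hac2⟩ := hp₂A c
      exact ⟨ac * a, mul_mem hac ha, by simp [ha1], by simp [ha2, hac2, smul_eq_mul]⟩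
  -- ker p₁ ⊆ A
  have hker : ∀ d : D, p₁ d = 0 → d ∈ A := by
    intro d hd
    have h2d : p₂ d ∈ RingHom.ker q₂.toRingHom := by
      have := hcomm' d
      rw [hd, map_zero] at this
      exact this.symm
    obtain ⟨a, ha, ha1, ha2⟩ := hT (p₂ d) h2d
    have : d = a := hinj (by simp [hd, ha1, ha2])
    exact this ▸ ha
  -- conclude A = ⊤
  have htop : A = ⊤ := by
    rw [eq_top_iff]
    intro d _
    obtain ⟨a, ha, hab⟩ := hp₁A (p₁ d)
    have : d - a ∈ A := hker _ (by simp [hab])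
    have : a + (d - a) ∈ A := add_mem ha this
    simpa using this
  exact ⟨⟨S, htop⟩⟩
end

section
/- Let D = A ×_C B be a fiber product of commutative rings where the map B → C has kernel consisting of π-power torsion elements (π ∈ D mapping compatibly), and A is a ring in which π is invertible and acts invertibly on the fibered structure in the sense that the map D[1/π] → A induced by the first projection is surjective. Then the kernel of D[1/π] → A is zero; that is, if d = (a, b) ∈ D maps to 0 in A, then b is π-power torsion and d becomes 0 in D[1/π]. -/
/-- Let `D = A ×_C B` be a fiber product of commutative rings (given by
projections `pA : D → A`, `pB : D → B` and maps `f : A → C`, `g : B → C` with `f ∘ pA = g ∘ pB`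
and the pairing `d ↦ (pA d, pB d)` injective). Let `π ∈ D` have invertible image in `A`, and
suppose the kernel of `g : B → C` consists exactly of the `π`-power torsion elements of `B`.
Then the kernel of `D[1/π] → A` is zero: if `d ∈ D` maps to `0` in `A`, then (its second
component is `π`-power torsion and) `d` is killed by a power of `π`, i.e. `d = 0` in `D[1/π]`. -/
theorem statement6 (A B C D : Type*) [CommRing A] [CommRing B] [CommRing C] [CommRing D]
    (f : A →+* C) (g : B →+* C) (pA : D →+* A) (pB : D →+* B)
    (hcomm : f.comp pA = g.comp pB)
    (hinj : Function.Injective (fun d : D => (pA d, pB d)))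
    (π : D) (hπ : IsUnit (pA π))
    (hker : ∀ b : B, g b = 0 ↔ ∃ n : ℕ, (pB π) ^ n * b = 0) :
    ∀ d : D, pA d = 0 → ∃ n : ℕ, π ^ n * d = 0 := by
  intro d hd
  have hg : g (pB d) = 0 := by
    have := DFunLike.congr_fun hcomm d
    simp only [RingHom.comp_apply] at this
    rw [← this, hd, map_zero]
  obtain ⟨n, hn⟩ := (hker (pB d)).mp hg
  refine ⟨n, hinj ?_⟩
  simp only [map_mul, map_pow, map_zero, Prod.mk.injEq, hd, mul_zero, hn, Prod.mk_eq_zero, and_self]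
end

section
/- Let A = { f(x) ∈ ℤ_p[x] : f(x + 1/p) ∈ ℤ_p[x] } ⊆ ℤ_p[x]. Then A is a subring of ℤ_p[x] and is generated as a ℤ_p-algebra by the three elements α = x(1−px)², β = px²(1−px), and γ = px. -/
open Polynomial

namespace Statement8Aux

variable {p : ℕ} [hp : Fact p.Prime]

/-- The membership condition defining `A`. -/
def cond (f : Polynomial ℤ_[p]) : Prop :=
  ∀ n : ℕ, ‖((f.map (algebraMap ℤ_[p] ℚ_[p])).comp
      (Polynomial.X + Polynomial.C ((p : ℚ_[p])⁻¹))).coeff n‖ ≤ 1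

lemma pO_ne : ((p : ℤ_[p])) ≠ 0 := Nat.cast_ne_zero.mpr hp.out.ne_zero

lemma pK_ne : ((p : ℚ_[p])) ≠ 0 := Nat.cast_ne_zero.mpr hp.out.ne_zero

lemma cond_iff {f : Polynomial ℤ_[p]} :
    cond f ↔ ∃ h : Polynomial ℤ_[p],
      (f.map (algebraMap ℤ_[p] ℚ_[p])).comp (X + C ((p : ℚ_[p])⁻¹))
        = h.map (algebraMap ℤ_[p] ℚ_[p]) := by
  constructor
  · intro hf
    have hmem : ∀ n, ((f.map (algebraMap ℤ_[p] ℚ_[p])).comp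
        (X + C ((p : ℚ_[p])⁻¹))).coeff n ∈ Set.range (algebraMap ℤ_[p] ℚ_[p]) :=
      fun n => ⟨⟨_, hf n⟩, rfl⟩
    obtain ⟨h, hh⟩ := (mem_lifts _).mp ((lifts_iff_coeff_lifts _).mpr hmem)
    exact ⟨h, hh.symm⟩
  · rintro ⟨h, hh⟩ n
    rw [hh, coeff_map, PadicInt.algebraMap_apply, PadicInt.padic_norm_e_of_padicInt]
    exact PadicInt.norm_le_one _

/-- Vanishing lemma over a field. -/
lemma vanish {k : Type*} [Field k] {n j : ℕ} (h2j : 2 * j < n) (G : k[X])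
    (hdeg : G.natDegree ≤ n) (h1 : X ^ (n - j) ∣ G) (h2 : X ^ (n - j) ∣ G.comp (X + 1)) :
    G = 0 := by
  obtain ⟨g, rfl⟩ := h1
  rcases eq_or_ne g 0 with rfl | hg
  · simp
  have hdg : g.natDegree ≤ j := by
    have hmul := natDegree_mul (p := (X : k[X]) ^ (n - j)) (q := g)
      (pow_ne_zero _ X_ne_zero) hg
    rw [natDegree_pow, natDegree_X, mul_one] at hmul
    omega
  have hcopX : IsCoprime (X : k[X]) (X + 1) := ⟨-1, 1, by ring⟩
  have hcop : IsCoprime ((X : k[X]) ^ (n - j)) ((X + 1) ^ (n - j)) := hcopX.pow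
  have h3 : (X : k[X]) ^ (n - j) ∣ g.comp (X + 1) := by
    rw [mul_comp, pow_comp, X_comp] at h2
    exact hcop.dvd_of_dvd_mul_left h2
  have hzero : g.comp (X + 1) = 0 := by
    by_contra hne
    have hle := natDegree_le_of_dvd h3 hne
    have hle2 : (g.comp (X + 1)).natDegree ≤ g.natDegree * (X + (1 : k[X])).natDegree :=
      natDegree_comp_le
    have hx1 : (X + (1 : k[X])).natDegree = 1 := by
      simpa using natDegree_X_add_C (1 : k)
    rw [natDegree_pow, natDegree_X, mul_one] at hle
    rw [hx1, mul_one] at hle2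
    omega
  have hback : ((X : k[X]) + 1).comp (X + C (-1 : k)) = X := by
    simp [add_comp]
  have : g = 0 := by
    have hcomp := congrArg (fun t => t.comp (X + C (-1 : k))) hzero
    simpa [comp_assoc, hback] using hcomp
  simp [this]

lemma dvd_iff_toZMod {z : ℤ_[p]} : (p : ℤ_[p]) ∣ z ↔ PadicInt.toZMod z = 0 := by
  rw [← Ideal.mem_span_singleton, ← PadicInt.maximalIdeal_eq_span_p, ← PadicInt.ker_toZMod,
    RingHom.mem_ker]

/-- scaleRoots over a field as an explicit composition. -/
lemma scaleRoots_field {K : Type*} [Field K] (g : K[X]) {s : K} (hs : s ≠ 0) :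
    g.scaleRoots s = C (s ^ g.natDegree) * g.comp (C s⁻¹ * X) := by
  have h1 : (g.scaleRoots s).comp (C s * X) = C (s ^ g.natDegree) * g := by
    have h := scaleRoots_eval₂_mul (p := g) (C : K →+* K[X]) X s
    rw [eval₂_C_X] at h
    calc (g.scaleRoots s).comp (C s * X) = eval₂ C (C s * X) (g.scaleRoots s) := rfl
      _ = (C s) ^ g.natDegree * g := h
      _ = C (s ^ g.natDegree) * g := by rw [C_pow]
  have h2 : ((C s : K[X]) * X).comp (C s⁻¹ * X) = X := by
    rw [mul_comp, C_comp, X_comp, ← mul_assoc, ← C_mul, mul_inv_cancel₀ hs, C_1, one_mul]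
  calc g.scaleRoots s = ((g.scaleRoots s).comp (C s * X)).comp (C s⁻¹ * X) := by
        rw [comp_assoc, h2, comp_X]
    _ = (C (s ^ g.natDegree) * g).comp (C s⁻¹ * X) := by rw [h1]
    _ = C (s ^ g.natDegree) * g.comp (C s⁻¹ * X) := by rw [mul_comp, C_comp]

/-- Key valuation bound. -/
lemma key (f h : Polynomial ℤ_[p])
    (rel : (f.map (algebraMap ℤ_[p] ℚ_[p])).comp (X + C ((p : ℚ_[p])⁻¹))
      = h.map (algebraMap ℤ_[p] ℚ_[p])) :
    (p : ℤ_[p]) ^ ((f.natDegree + 1) / 2) ∣ f.leadingCoeff := by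
  rcases eq_or_ne f 0 with rfl | hf0
  · simp
  have hinj : Function.Injective (algebraMap ℤ_[p] ℚ_[p]) := IsFractionRing.injective _ _
  set ι := algebraMap ℤ_[p] ℚ_[p] with hι
  set d := f.natDegree with hd
  have hrelT : taylor ((p : ℚ_[p])⁻¹) (f.map ι) = h.map ι := by
    rw [taylor_apply]; exact rel
  have hh0 : h ≠ 0 := by
    intro h0
    apply hf0
    rw [h0, Polynomial.map_zero] at hrelT
    have := congrArg (taylor (-(p : ℚ_[p])⁻¹)) hrelT
    rw [taylor_taylor, map_zero, neg_add_cancel, taylor_zero] at this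
    exact (Polynomial.map_eq_zero_iff hinj).mp this
  have hdh : h.natDegree = d := by
    have h1 : (h.map ι).natDegree = h.natDegree := natDegree_map_eq_of_injective hinj h
    rw [← hrelT, natDegree_taylor, natDegree_map_eq_of_injective hinj] at h1
    exact h1.symm
  -- the rescaled polynomials
  set F := f.scaleRoots (p : ℤ_[p]) with hF
  set Q := h.scaleRoots (p : ℤ_[p]) with hQ
  have hFne : F ≠ 0 := scaleRoots_ne_zero hf0 _
  have hfl : ι f.leadingCoeff ≠ 0 := fun hc => leadingCoeff_ne_zero.mpr hf0 (hinj (by simpa using hc))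
  have hhl : ι h.leadingCoeff ≠ 0 := fun hc => leadingCoeff_ne_zero.mpr hh0 (hinj (by simpa using hc))
  -- the key identity
  have E : F.comp (X + 1) = Q := by
    apply map_injective ι hinj
    rw [Polynomial.map_comp, hF, hQ, map_scaleRoots f _ ι hfl, map_scaleRoots h _ ι hhl]
    have hmapX1 : ((X : Polynomial ℤ_[p]) + 1).map ι = X + 1 := by
      simp
    have hnd : (h.map ι).natDegree = (f.map ι).natDegree := by
      rw [natDegree_map_eq_of_injective hinj, natDegree_map_eq_of_injective hinj, hdh]
    rw [hmapX1, map_natCast, scaleRoots_field (f.map ι) pK_ne, scaleRoots_field (h.map ι) pK_ne,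
      hnd, ← rel, mul_comp, C_comp, comp_assoc, comp_assoc]
    congr 2
    rw [mul_comp, C_comp, X_comp, add_comp, X_comp, C_comp]
    ring
  -- the inductive divisibility
  have main : ∀ j : ℕ, 2 * j ≤ d + 1 → (C ((p : ℤ_[p])) ^ j ∣ F) := by
    intro j
    induction j with
    | zero => intro _; simpa using one_dvd F
    | succ j IHj =>
      intro hj
      obtain ⟨u, hu⟩ := IHj (by omega)
      have hu0 : u ≠ 0 := by rintro rfl; rw [mul_zero] at hu; exact hFne hu
      have hudeg : u.natDegree ≤ d := by
        have : F.natDegree = u.natDegree := by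
          rw [hu, ← C_pow, natDegree_C_mul (pow_ne_zero _ pO_ne)]
        rw [hF, natDegree_scaleRoots] at this
        omega
      have hcancel : ∀ (v : Polynomial ℤ_[p]) (w : Polynomial ℤ_[p]) (k : ℕ),
          C ((p : ℤ_[p])) ^ j * v = w.scaleRoots (p : ℤ_[p]) → w.natDegree = d → k + j < d →
          (p : ℤ_[p]) ∣ v.coeff k := by
        intro v w k hvw hwd hk
        have hco : (p : ℤ_[p]) ^ j * v.coeff k = w.coeff k * (p : ℤ_[p]) ^ (d - k) := by
          have h' := congrArg (fun t : Polynomial ℤ_[p] => t.coeff k) hvw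
          simp only [← C_pow, coeff_C_mul, coeff_scaleRoots, hwd] at h'
          exact h'
        obtain ⟨m, hm, hm0⟩ : ∃ m, d - k = j + m ∧ m ≠ 0 := ⟨d - k - j, by omega, by omega⟩
        have hvk : v.coeff k = w.coeff k * (p : ℤ_[p]) ^ m := by
          apply mul_left_cancel₀ (pow_ne_zero j (pO_ne (p := p)))
          rw [hco, hm, pow_add]; ring
        rw [hvk]
        exact dvd_mul_of_dvd_right (dvd_pow_self _ hm0) _
      have hQu : C ((p : ℤ_[p])) ^ j * (u.comp (X + 1)) = Q := by
        rw [← E, hu, mul_comp, pow_comp, C_comp]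
      have hG : u.map (PadicInt.toZMod) = 0 := by
        apply vanish (n := d) (j := j) (by omega)
        · exact natDegree_map_le.trans hudeg
        · rw [X_pow_dvd_iff]
          intro i hi
          rw [coeff_map]
          exact dvd_iff_toZMod.mp (hcancel u f i hu.symm rfl (by omega))
        · have hmc : (u.map (PadicInt.toZMod)).comp (X + 1)
              = (u.comp (X + 1)).map (PadicInt.toZMod) := by
            rw [Polynomial.map_comp]; simp
          rw [X_pow_dvd_iff]
          intro i hi
          rw [hmc, coeff_map]
          exact dvd_iff_toZMod.mp (hcancel (u.comp (X + 1)) h i hQu hdh (by omega))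
      have hCu : C ((p : ℤ_[p])) ∣ u := by
        rw [C_dvd_iff_dvd_coeff]
        intro i
        apply dvd_iff_toZMod.mpr
        have := congrArg (fun t => t.coeff i) hG
        simpa using this
      obtain ⟨u', rfl⟩ := hCu
      exact ⟨u', by rw [hu]; ring⟩
  have hm := main ((d + 1) / 2) (by omega)
  have hco := (C_dvd_iff_dvd_coeff ((p : ℤ_[p]) ^ ((d + 1) / 2)) F).mp (by rwa [← C_pow] at hm) d
  rwa [hd, coeff_scaleRoots_natDegree] at hco

/-- The generating set. -/
def gens (p : ℕ) [Fact p.Prime] : Set (Polynomial ℤ_[p]) :=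
  {Polynomial.X * (1 - Polynomial.C (p : ℤ_[p]) * Polynomial.X) ^ 2,
   Polynomial.C (p : ℤ_[p]) * Polynomial.X ^ 2
     * (1 - Polynomial.C (p : ℤ_[p]) * Polynomial.X),
   Polynomial.C (p : ℤ_[p]) * Polynomial.X}

lemma hqC : (C ((p : ℚ_[p])) : Polynomial ℚ_[p]) * C ((p : ℚ_[p])⁻¹) = 1 := by
  rw [← C_mul, mul_inv_cancel₀ pK_ne, C_1]

lemma cond_gens : ∀ g ∈ (gens p), cond g := by
  have hιp : (algebraMap ℤ_[p] ℚ_[p]) ((p : ℤ_[p])) = ((p : ℚ_[p])) := map_natCast _ p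
  intro g hg
  rcases hg with rfl | rfl | rfl
  · -- α
    apply cond_iff.mpr
    refine ⟨C (p : ℤ_[p]) ^ 2 * X ^ 3 + C (p : ℤ_[p]) * X ^ 2, ?_⟩
    simp only [Polynomial.map_mul, Polynomial.map_pow, Polynomial.map_sub, Polynomial.map_one,
      Polynomial.map_add, Polynomial.map_C, Polynomial.map_X, hιp,
      mul_comp, pow_comp, sub_comp, one_comp, X_comp, C_comp, add_comp]
    linear_combination (C ((p : ℚ_[p])) * X ^ 2 + (X + C ((p : ℚ_[p])⁻¹)) *
      (2 * C ((p : ℚ_[p])) * X + C ((p : ℚ_[p])) * C ((p : ℚ_[p])⁻¹) - 1)) * (hqC (p := p))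
  · -- β
    apply cond_iff.mpr
    refine ⟨-(C (p : ℤ_[p]) ^ 2 * X ^ 3) - 2 * (C (p : ℤ_[p]) * X ^ 2) - X, ?_⟩
    simp only [Polynomial.map_mul, Polynomial.map_pow, Polynomial.map_sub, Polynomial.map_one,
      Polynomial.map_add, Polynomial.map_C, Polynomial.map_X, hιp, Polynomial.map_neg,
      Polynomial.map_ofNat, mul_comp, pow_comp, sub_comp, one_comp, X_comp, C_comp, add_comp,
      neg_comp]
    linear_combination (-(2 * C ((p : ℚ_[p])) * X ^ 2)
      - X * (C ((p : ℚ_[p])) * C ((p : ℚ_[p])⁻¹) + 1)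
      - C ((p : ℚ_[p])) * (X + C ((p : ℚ_[p])⁻¹)) ^ 2) * (hqC (p := p))
  · -- γ
    apply cond_iff.mpr
    refine ⟨C (p : ℤ_[p]) * X + 1, ?_⟩
    simp only [Polynomial.map_mul, Polynomial.map_add, Polynomial.map_one, Polynomial.map_C,
      Polynomial.map_X, hιp, mul_comp, X_comp, C_comp]
    linear_combination (hqC (p := p))

/-- `A` as a subalgebra. -/
def Asub : Subalgebra ℤ_[p] (Polynomial ℤ_[p]) where
  carrier := {f | cond f}
  mul_mem' := by
    intro f g hf hg
    obtain ⟨wf, hwf⟩ := cond_iff.mp hf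
    obtain ⟨wg, hwg⟩ := cond_iff.mp hg
    exact cond_iff.mpr ⟨wf * wg,
      by rw [Polynomial.map_mul, mul_comp, hwf, hwg, ← Polynomial.map_mul]⟩
  add_mem' := by
    intro f g hf hg
    obtain ⟨wf, hwf⟩ := cond_iff.mp hf
    obtain ⟨wg, hwg⟩ := cond_iff.mp hg
    exact cond_iff.mpr ⟨wf + wg,
      by rw [Polynomial.map_add, add_comp, hwf, hwg, ← Polynomial.map_add]⟩
  algebraMap_mem' := by
    intro r
    apply cond_iff.mpr
    refine ⟨C r, ?_⟩
    rw [Polynomial.algebraMap_eq, Polynomial.map_C, C_comp]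

lemma adjoin_le_Asub : Algebra.adjoin ℤ_[p] (gens p) ≤ Asub :=
  Algebra.adjoin_le cond_gens

lemma cond_sub {f g : Polynomial ℤ_[p]} (hf : cond f) (hg : cond g) : cond (f - g) := by
  obtain ⟨wf, hwf⟩ := cond_iff.mp hf
  obtain ⟨wg, hwg⟩ := cond_iff.mp hg
  exact cond_iff.mpr ⟨wf - wg,
    by rw [Polynomial.map_sub, sub_comp, hwf, hwg, ← Polynomial.map_sub]⟩

lemma forward : ∀ (n : ℕ) (f : Polynomial ℤ_[p]), f.natDegree = n → cond f →
    f ∈ Algebra.adjoin ℤ_[p] (gens p) := by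
  intro n
  induction n using Nat.strong_induction_on with
  | _ n IH =>
    intro f hdeg hf
    rcases Nat.eq_zero_or_pos n with hn0 | hn1
    · subst hn0
      rw [eq_C_of_natDegree_eq_zero hdeg, ← Polynomial.algebraMap_eq]
      exact Subalgebra.algebraMap_mem _ _
    · have hf0 : f ≠ 0 := fun h0 => by rw [h0, natDegree_zero] at hdeg; omega
      obtain ⟨w, hw⟩ := cond_iff.mp hf
      have hdvd := key f w hw
      rw [hdeg] at hdvd
      obtain ⟨u, hu⟩ := hdvd
      have ha0 : f.leadingCoeff ≠ 0 := leadingCoeff_ne_zero.mpr hf0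
      have hu0 : u ≠ 0 := by rintro rfl; rw [mul_zero] at hu; exact ha0 hu
      set γP : Polynomial ℤ_[p] := C (p : ℤ_[p]) * X with hγP
      set δP : Polynomial ℤ_[p] := X - C (p : ℤ_[p]) * X ^ 2 with hδP
      have hδquad : δP = C (-(p : ℤ_[p])) * X ^ 2 + C 1 * X + C 0 := by
        rw [hδP]; simp only [map_neg, map_one, map_zero]; ring
      have hγdeg : γP.natDegree = 1 := natDegree_C_mul_X _ pO_ne
      have hγlc : γP.leadingCoeff = (p : ℤ_[p]) := by
        rw [hγP, leadingCoeff_mul, leadingCoeff_C, leadingCoeff_X, mul_one]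
      have hδdeg : δP.natDegree = 2 := by
        rw [hδquad]; exact natDegree_quadratic (neg_ne_zero.mpr pO_ne)
      have hδlc : δP.leadingCoeff = -(p : ℤ_[p]) := by
        rw [hδquad]; exact leadingCoeff_quadratic (neg_ne_zero.mpr pO_ne)
      have hγ0 : γP ≠ 0 := leadingCoeff_ne_zero.mp (by rw [hγlc]; exact pO_ne)
      have hδ0 : δP ≠ 0 :=
        leadingCoeff_ne_zero.mp (by rw [hδlc]; exact neg_ne_zero.mpr pO_ne)
      have hc0 : ((-1 : ℤ_[p]) ^ (n / 2) * u) ≠ 0 :=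
        mul_ne_zero (pow_ne_zero _ (neg_ne_zero.mpr one_ne_zero)) hu0
      set g : Polynomial ℤ_[p] :=
        C ((-1 : ℤ_[p]) ^ (n / 2) * u) * (γP ^ (n % 2) * δP ^ (n / 2)) with hgdef
      have hg0 : g ≠ 0 := by
        apply mul_ne_zero (by rwa [Ne, C_eq_zero])
        exact mul_ne_zero (pow_ne_zero _ hγ0) (pow_ne_zero _ hδ0)
      have hgdeg : g.natDegree = n := by
        rw [hgdef, natDegree_C_mul hc0,
          natDegree_mul (pow_ne_zero _ hγ0) (pow_ne_zero _ hδ0),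
          natDegree_pow, natDegree_pow, hγdeg, hδdeg]
        omega
      have hglc : g.leadingCoeff = f.leadingCoeff := by
        rw [hgdef, leadingCoeff_mul, leadingCoeff_mul, leadingCoeff_pow, leadingCoeff_pow,
          leadingCoeff_C, hγlc, hδlc, hu,
          show (n + 1) / 2 = n % 2 + n / 2 from by omega, pow_add,
          neg_pow ((p : ℤ_[p])) (n / 2)]
        have h1 : ((-1 : ℤ_[p])) ^ (n / 2) * ((-1 : ℤ_[p])) ^ (n / 2) = 1 := by
          rw [← pow_add]; exact Even.neg_one_pow ⟨n / 2, rfl⟩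
        linear_combination (u * (p : ℤ_[p]) ^ (n % 2) * (p : ℤ_[p]) ^ (n / 2)) * h1
      have hδR : δP ∈ Algebra.adjoin ℤ_[p] (gens p) := by
        have hδab : δP = X * (1 - C (p : ℤ_[p]) * X) ^ 2
            + C (p : ℤ_[p]) * X ^ 2 * (1 - C (p : ℤ_[p]) * X) := by
          rw [hδP]; ring
        rw [hδab]
        exact add_mem (Algebra.subset_adjoin (Set.mem_insert _ _))
          (Algebra.subset_adjoin (Set.mem_insert_of_mem _ (Set.mem_insert _ _)))
      have hγR : γP ∈ Algebra.adjoin ℤ_[p] (gens p) :=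
        Algebra.subset_adjoin
          (Set.mem_insert_of_mem _ (Set.mem_insert_of_mem _ rfl))
      have hgR : g ∈ Algebra.adjoin ℤ_[p] (gens p) := by
        rw [hgdef]
        refine mul_mem ?_ (mul_mem (pow_mem hγR _) (pow_mem hδR _))
        rw [← Polynomial.algebraMap_eq]
        exact Subalgebra.algebraMap_mem _ _
      rcases eq_or_ne (f - g) 0 with hfg | hfg
      · rw [sub_eq_zero] at hfg; rw [hfg]; exact hgR
      · have hdeglt : (f - g).natDegree < n := by
          have hdeq : f.degree = g.degree := by
            rw [degree_eq_natDegree hf0, degree_eq_natDegree hg0, hdeg, hgdeg]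
          have hdlt : (f - g).degree < f.degree := degree_sub_lt hdeq hf0 hglc.symm
          rw [natDegree_lt_iff_degree_lt hfg]
          rw [degree_eq_natDegree hf0, hdeg] at hdlt
          exact hdlt
        have hcondg : cond g := adjoin_le_Asub hgR
        have := IH _ hdeglt (f - g) rfl (cond_sub hf hcondg)
        have hf' : f = f - g + g := by ring
        rw [hf']
        exact add_mem this hgR

end Statement8Aux

/-- Let `A = { f ∈ ℤ_p[x] : f(x + 1/p) ∈ ℤ_p[x] }` (the condition being that
all coefficients of `f(x + 1/p) ∈ ℚ_p[x]` have norm at most `1`). Then `A` coincides with the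
`ℤ_p`-subalgebra of `ℤ_p[x]` generated by `α = x(1−px)²`, `β = px²(1−px)` and `γ = px`; in
particular it is a subring generated over `ℤ_p` by these three elements. -/
theorem statement8 (p : ℕ) [Fact p.Prime] :
    {f : Polynomial ℤ_[p] | ∀ n : ℕ,
        ‖((f.map (algebraMap ℤ_[p] ℚ_[p])).comp
            (Polynomial.X + Polynomial.C ((p : ℚ_[p])⁻¹))).coeff n‖ ≤ 1}
      = ↑(Algebra.adjoin ℤ_[p]
          ({Polynomial.X * (1 - Polynomial.C (p : ℤ_[p]) * Polynomial.X) ^ 2,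
            Polynomial.C (p : ℤ_[p]) * Polynomial.X ^ 2
              * (1 - Polynomial.C (p : ℤ_[p]) * Polynomial.X),
            Polynomial.C (p : ℤ_[p]) * Polynomial.X} : Set (Polynomial ℤ_[p]))) := by
  ext f
  simp only [Set.mem_setOf_eq, SetLike.mem_coe]
  constructor
  · intro hf
    exact Statement8Aux.forward _ f rfl hf
  · intro hf
    exact Statement8Aux.adjoin_le_Asub hf
end

section
/- Let A be a Noetherian ring, I = (π) ⊆ A, Â the π-adic completion, M a finitely generated A-module. If both M[1/π] = 0 and M ⊗_A Â = 0, then M = 0. -/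
open TensorProduct

/-- Let `A` be Noetherian, `π ∈ A`, `Â` the `π`-adic completion and `M` a
finitely generated `A`-module. If `M[1/π] = 0` and `M ⊗_A Â = 0`, then `M = 0`. -/
theorem statement19 (A : Type*) [CommRing A] [IsNoetherianRing A] (π : A)
    (M : Type*) [AddCommGroup M] [Module A M] [Module.Finite A M]
    (h1 : Subsingleton (LocalizedModule (Submonoid.powers π) M))
    (h2 : Subsingleton ((AdicCompletion (Ideal.span {π}) A) ⊗[A] M)) :
    Subsingleton M := by
  -- Step 1: uniform n with π^n • m = 0 for all m
  obtain ⟨s, hs⟩ := Module.Finite.fg_top (R := A) (M := M)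
  have key : ∀ m : M, ∃ k : ℕ, π ^ k • m = 0 := by
    intro m
    have : LocalizedModule.mk m (1 : Submonoid.powers π) = LocalizedModule.mk 0 1 :=
      Subsingleton.elim _ _
    obtain ⟨u, hu⟩ := LocalizedModule.mk_eq.mp this
    obtain ⟨k, hk⟩ := u.2
    exact ⟨k, by simpa [hk, Submonoid.smul_def] using hu⟩
  choose k hk using key
  obtain ⟨n, hn⟩ : ∃ n : ℕ, ∀ m : M, π ^ n • m = 0 := by
    refine ⟨s.sup k, fun m => ?_⟩
    have : ∀ x ∈ (s : Set M), π ^ (s.sup k) • x = 0 := by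
      intro x hx
      obtain ⟨j, hj⟩ : ∃ j, s.sup k = k x + j :=
        Nat.exists_eq_add_of_le (Finset.le_sup (by exact_mod_cast hx))
      rw [hj, pow_add, mul_comm, mul_smul, hk x, smul_zero]
    have hm : m ∈ Submodule.span A (s : Set M) := hs ▸ Submodule.mem_top
    induction hm using Submodule.span_induction with
    | mem x hx => exact this x hx
    | zero => simp
    | add x y _ _ hx hy => rw [smul_add, hx, hy, add_zero]
    | smul a x _ hx => rw [smul_comm, hx, smul_zero]
  -- Step 2: build f : Â ⊗ M →ₗ M with f (1 ⊗ m) = m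
  set I := Ideal.span {π}
  have hker : (I ^ n • ⊤ : Submodule A A) ≤ LinearMap.ker (LinearMap.lsmul A M) := by
    rw [Submodule.smul_eq_map₂]
    refine Submodule.map₂_le.mpr fun a ha b _ => ?_
    have ha' : a ∈ Ideal.span {π ^ n} := by
      rw [← Ideal.span_singleton_pow]; exact ha
    obtain ⟨c, rfl⟩ := Ideal.mem_span_singleton'.mp ha'
    ext m
    simp only [LinearMap.lsmul_apply, LinearMap.zero_apply]
    rw [smul_eq_mul, mul_comm c, mul_assoc, mul_smul, hn]
  let g : (A ⧸ (I ^ n • ⊤ : Submodule A A)) →ₗ[A] (M →ₗ[A] M) :=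
    Submodule.liftQ _ (LinearMap.lsmul A M) hker
  let f : (AdicCompletion I A) ⊗[A] M →ₗ[A] M :=
    TensorProduct.lift (g.comp (AdicCompletion.eval I A n))
  refine ⟨fun m m' => ?_⟩
  have h : ∀ x : M, f ((AdicCompletion.of I A 1) ⊗ₜ[A] x) = x := by
    intro x
    show g (AdicCompletion.eval I A n (AdicCompletion.of I A 1)) x = x
    rw [AdicCompletion.eval_of]
    show (LinearMap.lsmul A M) 1 x = x
    simp
  calc m = f ((AdicCompletion.of I A 1) ⊗ₜ[A] m) := (h m).symm
    _ = f ((AdicCompletion.of I A 1) ⊗ₜ[A] m') := by rw [Subsingleton.elim ((AdicCompletion.of I A 1) ⊗ₜ[A] m) ((AdicCompletion.of I A 1) ⊗ₜ[A] m')]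
    _ = m' := h m'
end
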